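/- Let X ⊆ G be classes of objects in an abelian category A such that (X, Y) (with Y = X^⊥) is a complete hereditary cotorsion pair and (G, H, X ∩ Y) is a left AB-context (in particular every object of A has finite X-resolution dimension and H = G^⊥ consists of the objects with finite (X ∩ Y)-resolution dimension). Then G ∩ X̂ = X, where X̂ is the class of objects with finite X-resolution dimension; equivalently, an object of G with finite X-resolution dimension lies in X. -/

import Mathlib

open CategoryTheory Limits

universe w v u

namespace PaperAB

variable {C : Type u} [Category.{v} C] [Abelian C] [HasExt.{w} C]

/-- Vanishing of `Ext^n(A, B)`. -/
def extZero (A B : C) (n : ℕ) : Prop := Subsingleton (Abelian.Ext A B n)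

/-- The right `Ext^1`-orthogonal class of a class `𝒳`. -/
def rightOrth (𝒳 : C → Prop) : C → Prop := fun B => ∀ A, 𝒳 A → extZero A B 1

/-- The left `Ext^1`-orthogonal class of a class `𝒴`. -/
def leftOrth (𝒴 : C → Prop) : C → Prop := fun A => ∀ B, 𝒴 B → extZero A B 1

/-- `f, g` form a short exact sequence `0 → A → B → D → 0`. -/
def IsSES {A B D : C} (f : A ⟶ B) (g : B ⟶ D) : Prop :=
  ∃ (zero : f ≫ g = 0), (ShortComplex.mk f g zero).ShortExact

/-- `(𝒳, 𝒴)` is a cotorsion pair. -/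
structure CotorsionPair (𝒳 𝒴 : C → Prop) : Prop where
  eqLeft : ∀ A, 𝒳 A ↔ leftOrth 𝒴 A
  eqRight : ∀ B, 𝒴 B ↔ rightOrth 𝒳 B

/-- Completeness of a pair of classes `(𝒳, 𝒴)`: every object admits a special
`𝒳`-precover and a special `𝒴`-preenvelope. -/
def Complete (𝒳 𝒴 : C → Prop) : Prop :=
  ∀ A : C,
    (∃ (Y X : C) (f : Y ⟶ X) (g : X ⟶ A), IsSES f g ∧ 𝒳 X ∧ 𝒴 Y) ∧
    (∃ (Y X : C) (f : A ⟶ Y) (g : Y ⟶ X), IsSES f g ∧ 𝒴 Y ∧ 𝒳 X)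

/-- Heredity: `Ext^n(𝒳, 𝒴) = 0` for all `n ≥ 1`. -/
def Hereditary (𝒳 𝒴 : C → Prop) : Prop :=
  ∀ A B, 𝒳 A → 𝒴 B → ∀ n, 1 ≤ n → extZero A B n

/-- Complete hereditary cotorsion pair. -/
structure CHCP (𝒳 𝒴 : C → Prop) : Prop where
  cotorsion : CotorsionPair 𝒳 𝒴
  complete : Complete 𝒳 𝒴
  hereditary : Hereditary 𝒳 𝒴

/-- `ResDimLE 𝒳 A n` : there exists an exact sequence
`0 → X n → ⋯ → X 0 → A → 0` with all `X i ∈ 𝒳`. -/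
def ResDimLE (𝒳 : C → Prop) (A : C) (n : ℕ) : Prop :=
  ∃ (X : ℕ → C) (d : ∀ i, X (i + 1) ⟶ X i) (ε : X 0 ⟶ A),
    (∀ i, i ≤ n → 𝒳 (X i)) ∧ (∀ i, n < i → IsZero (X i)) ∧ Epi ε ∧
    (∃ (zero : d 0 ≫ ε = 0), (ShortComplex.mk (d 0) ε zero).Exact) ∧
    (∀ i, ∃ (zero : d (i + 1) ≫ d i = 0),
      (ShortComplex.mk (d (i + 1)) (d i) zero).Exact)

/-- Objects of finite `𝒳`-resolution dimension (the class `X̂`). -/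
def FinResDim (𝒳 : C → Prop) (A : C) : Prop := ∃ n, ResDimLE 𝒳 A n

/-- The `𝒳`-resolution dimension of `A`, in `ℕ∞`. -/
noncomputable def ResDim (𝒳 : C → Prop) (A : C) : ℕ∞ :=
  sInf {m : ℕ∞ | ∃ n : ℕ, m = (n : ℕ∞) ∧ ResDimLE 𝒳 A n}

/-- The intersection of two classes. -/
def Inter (𝒳 𝒴 : C → Prop) : C → Prop := fun A => 𝒳 A ∧ 𝒴 A

def ClosedUnderExtensions (𝒲 : C → Prop) : Prop :=
  ∀ ⦃A B D : C⦄ (f : A ⟶ B) (g : B ⟶ D), IsSES f g → 𝒲 A → 𝒲 D → 𝒲 B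

def ClosedUnderKernels (𝒲 : C → Prop) : Prop :=
  ∀ ⦃A B D : C⦄ (f : A ⟶ B) (g : B ⟶ D), IsSES f g → 𝒲 B → 𝒲 D → 𝒲 A

def ClosedUnderCokernels (𝒲 : C → Prop) : Prop :=
  ∀ ⦃A B D : C⦄ (f : A ⟶ B) (g : B ⟶ D), IsSES f g → 𝒲 A → 𝒲 B → 𝒲 D

def ClosedUnderSummands (𝒲 : C → Prop) : Prop :=
  ∀ ⦃A B : C⦄ (i : A ⟶ B) (p : B ⟶ A), i ≫ p = 𝟙 A → 𝒲 B → 𝒲 A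

/-- A class is thick if it is closed under direct summands and has the
two-out-of-three property on short exact sequences. -/
def IsThick (𝒲 : C → Prop) : Prop :=
  ClosedUnderSummands 𝒲 ∧ ClosedUnderExtensions 𝒲 ∧
    ClosedUnderKernels 𝒲 ∧ ClosedUnderCokernels 𝒲

/-- A class is left thick if it is closed under direct summands, extensions and
kernels of epimorphisms. -/
def LeftThick (𝒲 : C → Prop) : Prop :=
  ClosedUnderSummands 𝒲 ∧ ClosedUnderExtensions 𝒲 ∧ ClosedUnderKernels 𝒲

/-- A class is right thick if it is closed under direct summands, extensions and
cokernels of monomorphisms. -/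
def RightThick (𝒲 : C → Prop) : Prop :=
  ClosedUnderSummands 𝒲 ∧ ClosedUnderExtensions 𝒲 ∧ ClosedUnderCokernels 𝒲

/-- `ω` is a cogenerator for `𝒳`. -/
def IsCogeneratorFor (ω 𝒳 : C → Prop) : Prop :=
  (∀ A, ω A → 𝒳 A) ∧
  ∀ A, 𝒳 A → ∃ (W A' : C) (f : A ⟶ W) (g : W ⟶ A'), IsSES f g ∧ ω W ∧ 𝒳 A'

/-- `ω` is an injective cogenerator for `𝒳`. -/
def IsInjCogeneratorFor (ω 𝒳 : C → Prop) : Prop :=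
  IsCogeneratorFor ω 𝒳 ∧ ∀ A W, 𝒳 A → ω W → ∀ n, 1 ≤ n → extZero A W n

/-- A left weak Auslander–Buchweitz context `(𝒳, 𝒴, ω)`. -/
structure LeftWeakABContext (𝒳 𝒴 ω : C → Prop) : Prop where
  ab1 : LeftThick 𝒳
  ab2 : RightThick 𝒴
  ab2' : ∀ A, 𝒴 A → FinResDim 𝒳 A
  ab3 : (∀ A, ω A ↔ 𝒳 A ∧ 𝒴 A) ∧ IsInjCogeneratorFor ω 𝒳

/-- A left Auslander–Buchweitz context: a left weak AB-context in which every
object has finite `𝒳`-resolution dimension. -/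
structure LeftABContext (𝒳 𝒴 ω : C → Prop) extends LeftWeakABContext 𝒳 𝒴 ω : Prop where
  hat_all : ∀ A : C, FinResDim 𝒳 A

end PaperAB

/-!
Induction on the length of an `𝒳`-resolution `0 → Xₙ → ⋯ → X₀ → A → 0` of `A ∈ 𝒢`. The kernel `K`
of `X₀ → A` lies in `𝒢` (left thickness) and has a shorter resolution, so `K ∈ 𝒳`. To see
`Ext¹(A, Z) = 0` for `Z ∈ 𝒳^⊥`, take a special `𝒳`-precover `0 → Z' → W → Z → 0`: then
`W ∈ 𝒳 ∩ 𝒳^⊥ = ω`, so `Ext¹(A, W) = 0` as `ω` is an injective cogenerator for `𝒢`, and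
`Ext²(A, Z') = 0` by dimension shifting along `0 → K → X₀ → A → 0`, using heredity.
-/

namespace PaperAB

open Abelian ZeroObject

section Resolution

variable {C : Type u} [Category.{v} C] [Abelian C]

theorem resDimLE_zero_of_mem {𝒳 : C → Prop} {A : C} (hA : 𝒳 A) : ResDimLE 𝒳 A 0 := by
  refine ⟨fun i => Nat.casesOn i A (fun _ => 0), fun _ => 0, 𝟙 A,
    fun i hi => by obtain rfl : i = 0 := Nat.le_zero.mp hi; exact hA,
    fun i hi => by
      obtain ⟨j, rfl⟩ := Nat.exists_eq_add_of_lt hi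
      exact isZero_zero C,
    inferInstance, ⟨by simp, ?_⟩, fun i => ⟨by simp, ?_⟩⟩
  · exact (ShortComplex.exact_iff_mono _ rfl).mpr (inferInstanceAs (Mono (𝟙 A)))
  · exact ShortComplex.exact_of_isZero_X₂ _ (isZero_zero C)

theorem ResDimLE.exists_iso_of_zero {𝒳 : C → Prop} {A : C} (h : ResDimLE 𝒳 A 0) :
    ∃ X₀, 𝒳 X₀ ∧ Nonempty (X₀ ≅ A) := by
  obtain ⟨X, d, ε, hX, hz, hε, ⟨_, hex⟩, _⟩ := h
  have hd : d 0 = 0 := (hz 1 Nat.one_pos).eq_of_src _ _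
  have : Mono ε := (ShortComplex.exact_iff_mono _ hd).mp hex
  have : IsIso ε := isIso_of_mono_of_epi ε
  exact ⟨X 0, hX 0 le_rfl, ⟨asIso ε⟩⟩

theorem ResDimLE.exists_isSES_of_succ {𝒳 : C → Prop} {A : C} {n : ℕ}
    (h : ResDimLE 𝒳 A (n + 1)) :
    ∃ (K X₀ : C) (f : K ⟶ X₀) (g : X₀ ⟶ A), IsSES f g ∧ 𝒳 X₀ ∧ ResDimLE 𝒳 K n := by
  obtain ⟨X, d, ε, hX, hz, hε, ⟨z₀, hex₀⟩, hd⟩ := h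
  obtain ⟨z₁, hex₁⟩ := hd 0
  have hses : IsSES (kernel.ι ε) ε :=
    ⟨kernel.condition ε, .mk' (ShortComplex.exact_of_f_is_kernel _ (kernelIsKernel ε))
      inferInstance hε⟩
  have zero : d 1 ≫ kernel.lift ε (d 0) z₀ = 0 := by
    rw [← cancel_mono (kernel.ι ε), Category.assoc, kernel.lift_ι, z₁, zero_comp]
  let φ : ShortComplex.mk (d 1) (kernel.lift ε (d 0) z₀) zero ⟶
      ShortComplex.mk (d 1) (d 0) z₁ :=
    { τ₁ := 𝟙 _, τ₂ := 𝟙 _, τ₃ := kernel.ι ε }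
  have : Epi φ.τ₁ := inferInstanceAs (Epi (𝟙 _))
  have : IsIso φ.τ₂ := inferInstanceAs (IsIso (𝟙 _))
  have : Mono φ.τ₃ := inferInstanceAs (Mono (kernel.ι ε))
  refine ⟨kernel ε, X 0, kernel.ι ε, ε, hses, hX 0 (Nat.zero_le _),
    fun i => X (i + 1), fun i => d (i + 1), kernel.lift ε (d 0) z₀,
    fun i hi => hX (i + 1) (by omega), fun i hi => hz (i + 1) (by omega),
    (ShortComplex.exact_iff_epi_kernel_lift (ShortComplex.mk (d 0) ε z₀)).mp hex₀,
    ⟨zero, (ShortComplex.exact_iff_of_epi_of_isIso_of_mono φ).mpr hex₁⟩, fun i => hd (i + 1)⟩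

end Resolution

section

variable {C : Type u} [Category.{v} C] [Abelian C] [HasExt.{w} C]

theorem extZero.eq_zero {A B : C} {n : ℕ} (h : extZero A B n) (x : Ext A B n) : x = 0 :=
  @Subsingleton.elim _ h x 0

theorem extZero_of_retract {A B Z : C} {n : ℕ} (i : A ⟶ B) (p : B ⟶ A) (hip : i ≫ p = 𝟙 A)
    (h : extZero B Z n) : extZero A Z n := by
  refine subsingleton_of_forall_eq 0 fun x => ?_
  calc x = (Ext.mk₀ (i ≫ p)).comp x (zero_add n) := by rw [hip, Ext.mk₀_id_comp]
    _ = (Ext.mk₀ i).comp ((Ext.mk₀ p).comp x (zero_add n)) (zero_add n) := by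
      rw [← Ext.mk₀_comp_mk₀_assoc]
    _ = 0 := by rw [h.eq_zero ((Ext.mk₀ p).comp x (zero_add n)), Ext.comp_zero]

namespace IsSES

variable {A B D : C} {f : A ⟶ B} {g : B ⟶ D}

theorem extZero_X₂ (hfg : IsSES f g) {T : C} {n : ℕ} (hA : extZero T A n)
    (hD : extZero T D n) : extZero T B n := by
  obtain ⟨_, hS⟩ := hfg
  refine subsingleton_of_forall_eq 0 fun x => ?_
  obtain ⟨x₁, rfl⟩ := Ext.covariant_sequence_exact₂ T hS x (hD.eq_zero _)
  rw [hA.eq_zero x₁, Ext.zero_comp]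

theorem extZero_X₃_succ (hfg : IsSES f g) {Z : C} {n : ℕ} (hA : extZero A Z n)
    (hB : extZero B Z (n + 1)) : extZero D Z (n + 1) := by
  obtain ⟨_, hS⟩ := hfg
  refine subsingleton_of_forall_eq 0 fun x => ?_
  obtain ⟨x₁, rfl⟩ := Ext.contravariant_sequence_exact₃ hS Z x (hB.eq_zero _) (add_comm 1 n)
  rw [hA.eq_zero x₁, Ext.comp_zero]

theorem extZero_X₃ (hfg : IsSES f g) {T : C} {n : ℕ} (hB : extZero T B n)
    (hA : extZero T A (n + 1)) : extZero T D n := by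
  obtain ⟨_, hS⟩ := hfg
  refine subsingleton_of_forall_eq 0 fun x => ?_
  obtain ⟨x₂, rfl⟩ := Ext.covariant_sequence_exact₃ T hS x rfl (hA.eq_zero _)
  rw [hB.eq_zero x₂, Ext.zero_comp]

end IsSES

theorem CotorsionPair.mem_of_iso {𝒳 𝒴 : C → Prop} (h : CotorsionPair 𝒳 𝒴) {A B : C}
    (e : A ≅ B) (hA : 𝒳 A) : 𝒳 B :=
  (h.eqLeft B).mpr fun Z hZ =>
    extZero_of_retract e.inv e.hom e.inv_hom_id ((h.eqLeft A).mp hA Z hZ)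

variable {𝒳 : C → Prop} (h𝒳 : CHCP 𝒳 (rightOrth 𝒳))
include h𝒳

theorem CHCP.mem_of_isSES {K X₀ A : C} {f : K ⟶ X₀} {g : X₀ ⟶ A} (hfg : IsSES f g)
    (hK : 𝒳 K) (hX₀ : 𝒳 X₀) (hA : ∀ W, 𝒳 W → rightOrth 𝒳 W → extZero A W 1) : 𝒳 A := by
  refine (h𝒳.cotorsion.eqLeft A).mpr fun Z hZ => ?_
  obtain ⟨Z', W, u, v, huv, hW, hZ'⟩ := (h𝒳.complete Z).1
  have hW' : rightOrth 𝒳 W := fun T hT => huv.extZero_X₂ (hZ' T hT) (hZ T hT)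
  have hAZ' : extZero A Z' 2 :=
    hfg.extZero_X₃_succ (hZ' K hK) (h𝒳.hereditary X₀ Z' hX₀ hZ' 2 one_le_two)
  exact huv.extZero_X₃ (hA W hW hW') hAZ'

theorem CHCP.mem_of_resDimLE {𝒢 : C → Prop} (hX𝒢 : ∀ A, 𝒳 A → 𝒢 A)
    (h𝒢 : ClosedUnderKernels 𝒢) (h𝒢W : ∀ A W, 𝒢 A → 𝒳 W → rightOrth 𝒳 W → extZero A W 1)
    {n : ℕ} : ∀ {A : C}, 𝒢 A → ResDimLE 𝒳 A n → 𝒳 A := by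
  induction n with
  | zero =>
    intro A _ hres
    obtain ⟨X₀, hX₀, ⟨e⟩⟩ := hres.exists_iso_of_zero
    exact h𝒳.cotorsion.mem_of_iso e hX₀
  | succ n ih =>
    intro A hA hres
    obtain ⟨K, X₀, f, g, hfg, hX₀, hK⟩ := hres.exists_isSES_of_succ
    exact h𝒳.mem_of_isSES hfg (ih (h𝒢 f g hfg (hX𝒢 X₀ hX₀) hA) hK) hX₀ (h𝒢W A · hA)

end

/-- If `𝒳 ⊆ 𝒢`, `(𝒳, 𝒳^⊥)` is a complete hereditary cotorsion
pair and `(𝒢, 𝒢^⊥, 𝒳 ∩ 𝒳^⊥)` is a left AB-context, then `𝒢 ∩ 𝒳̂ = 𝒳`, i.e. an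
object of `𝒢` with finite `𝒳`-resolution dimension lies in `𝒳`. -/
theorem statement6 {C : Type u} [Category.{v} C] [Abelian C] [HasExt.{w} C]
    {𝒳 𝒢 : C → Prop} (hXG : ∀ A, 𝒳 A → 𝒢 A)
    (h1 : CHCP 𝒳 (rightOrth 𝒳))
    (h2 : LeftABContext 𝒢 (rightOrth 𝒢) (Inter 𝒳 (rightOrth 𝒳))) :
    ∀ A, (𝒢 A ∧ FinResDim 𝒳 A) ↔ 𝒳 A := by
  intro A
  constructor
  · rintro ⟨hA, n, hres⟩
    exact h1.mem_of_resDimLE hXG h2.ab1.2.2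
      (fun A W hA hW hW' => h2.ab3.2.2 A W hA ⟨hW, hW'⟩ 1 le_rfl) hA hres
  · exact fun hA => ⟨hXG A hA, 0, resDimLE_zero_of_mem hA⟩

end PaperAB
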